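/- Let l ∈ (−1/2, 1/2). There exists a constant C > 0 depending only on l such that for all k > 0, |√k · J_{−l−1/2}(k)| ≤ C · ((1 + k)/k)^l. -/

import Mathlib

/-!
For `k > 0` write `√k J_ν(k) = 2^{-ν} w(k)` with `w(k) = k^{ν+1/2} S_ν(k²)`, where
`S_ν(x) = ∑ (-1/4)ⁿ xⁿ / (n! Γ(ν+n+1))` is entire. From `S_ν' = -S_{ν+1}/4` and the
contiguous relation `S_ν = (ν+1) S_{ν+1} - (x/4) S_{ν+2}`, `w` solves Bessel's equation in
Liouville normal form `w'' + (1 + (1/4 - ν²)/k²) w = 0`. On `[1, ∞)` the weighted energy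
`(w² + w'²) exp (|1/4 - ν²|/k)` is nonincreasing, so `w` is bounded there; on `(0, 1]`,
`|w(k)| ≤ k^{ν+1/2} max_{[0,1]} |S_ν|`. For `ν = -l - 1/2` this gives
`|√k J_ν(k)| ≲ max(1, 1/k)^l`, and `max(1, 1/k) ≤ (1+k)/k ≤ 2 max(1, 1/k)`.
-/

open MeasureTheory Real Filter Set

/-- The Bessel function of the first kind of order `ν`,
`J_ν(r) = (r/2)^ν ∑_{n=0}^∞ (−r²/4)^n / (n! Γ(ν+n+1))`. -/
noncomputable def besselJ (ν r : ℝ) : ℝ :=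
  (r / 2) ^ ν * ∑' n : ℕ, (-(r ^ 2 / 4)) ^ n / ((n.factorial : ℝ) * Real.Gamma (ν + n + 1))

open FormalMultilinearSeries
open scoped Nat

section PowerSeries

variable {𝕜 : Type*} [NontriviallyNormedField 𝕜] [CompleteSpace 𝕜] {c : ℕ → 𝕜}

theorem hasFPowerSeriesOnBall_ofScalarsSum (hc : (ofScalars 𝕜 c).radius = ⊤) :
    HasFPowerSeriesOnBall (ofScalarsSum c) (ofScalars 𝕜 c) 0 ⊤ :=
  hc ▸ (ofScalars 𝕜 c).hasFPowerSeriesOnBall (by simp [hc])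

theorem hasSum_ofScalarsSum (hc : (ofScalars 𝕜 c).radius = ⊤) (x : 𝕜) :
    HasSum (fun n ↦ c n * x ^ n) (ofScalarsSum c x) := by
  simpa [ofScalars_apply_eq, mul_comm] using
    (hasFPowerSeriesOnBall_ofScalarsSum hc).hasSum (y := x) (by simp)

theorem hasSum_natCast_mul_mul_pow
    (hc' : (ofScalars 𝕜 fun n ↦ (n + 1) * c (n + 1)).radius = ⊤) (x : 𝕜) :
    HasSum (fun n ↦ n * c n * x ^ n) (x * ofScalarsSum (fun n ↦ (n + 1) * c (n + 1)) x) := by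
  refine (hasSum_nat_add_iff' 1).mp ?_
  simpa [pow_succ, mul_comm, mul_left_comm, mul_assoc] using
    (hasSum_ofScalarsSum hc' x).mul_left x

theorem hasDerivAt_ofScalarsSum (hc : (ofScalars 𝕜 c).radius = ⊤)
    (hc' : (ofScalars 𝕜 fun n ↦ (n + 1) * c (n + 1)).radius = ⊤) (x : 𝕜) :
    HasDerivAt (ofScalarsSum c) (ofScalarsSum (fun n ↦ (n + 1) * c (n + 1)) x) x := by
  have hp := hasFPowerSeriesOnBall_ofScalarsSum hc
  have hdiff : DifferentiableAt 𝕜 (ofScalarsSum c) x :=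
    (hp.analyticAt_of_mem (by simp)).differentiableAt
  suffices deriv (ofScalarsSum c) x = ofScalarsSum (fun n ↦ (n + 1) * c (n + 1)) x from
    this ▸ hdiff.hasDerivAt
  rcases eq_or_ne x 0 with rfl | hx0
  · rw [hp.hasFPowerSeriesAt.deriv]
    simp
  -- the derivative series is only accessible on the diagonal, hence the division by `x`
  have hsum := (hp.fderiv.hasSum (y := x) (by simp)).mapL (ContinuousLinearMap.apply 𝕜 𝕜 x)
  simp only [zero_add, ContinuousLinearMap.apply_apply, derivSeries_apply_diag,
    ofScalars_apply_eq, nsmul_eq_mul, smul_eq_mul] at hsum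
  have hsum' := (hasSum_ofScalarsSum hc' x).mul_left x
  have hfderiv : fderiv 𝕜 (ofScalarsSum c) x x = x * deriv (ofScalarsSum c) x := by
    rw [← fderiv_apply_one_eq_deriv, ← smul_eq_mul, ← map_smul, smul_eq_mul, mul_one]
  refine mul_left_cancel₀ hx0 (hfderiv ▸ hsum.unique (hsum'.congr_fun fun n ↦ ?_))
  push_cast
  ring

end PowerSeries

theorem sq_le_of_ode_one_add_div_sq {w w' : ℝ → ℝ} {a c : ℝ} (ha : 0 < a)
    (hw : ∀ k, a ≤ k → HasDerivAt w (w' k) k)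
    (hw' : ∀ k, a ≤ k → HasDerivAt w' (-(1 + c / k ^ 2) * w k) k) {k : ℝ} (hk : a ≤ k) :
    w k ^ 2 ≤ (w a ^ 2 + w' a ^ 2) * exp (|c| / a) := by
  -- `G` is nonincreasing because `2 |c w w'| ≤ |c| (w² + w'²)`
  set G : ℝ → ℝ := fun k ↦ (w k ^ 2 + w' k ^ 2) * exp (|c| / k)
  have hG : ∀ k, a ≤ k → HasDerivAt G (exp (|c| / k) / k ^ 2 *
      (-2 * c * w k * w' k - |c| * (w k ^ 2 + w' k ^ 2))) k := by
    intro k hk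
    have hk0 : k ≠ 0 := (ha.trans_le hk).ne'
    simp only [G, div_eq_mul_inv]
    refine ((((hw k hk).pow 2).add ((hw' k hk).pow 2)).mul
      (((hasDerivAt_inv hk0).const_mul |c|).exp)).congr_deriv ?_
    simp only [Pi.add_apply, Pi.pow_apply]
    field_simp
    ring
  have hanti : AntitoneOn G (Ici a) := by
    refine antitoneOn_of_hasDerivWithinAt_nonpos (convex_Ici a)
      (fun k hk ↦ (hG k hk).continuousAt.continuousWithinAt)
      (fun k hk ↦ (hG k (interior_subset hk)).hasDerivWithinAt) fun k _ ↦ ?_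
    have h₁ : 0 ≤ (|c| + c) * (w k + w' k) ^ 2 :=
      mul_nonneg (by linarith [neg_abs_le c]) (sq_nonneg _)
    have h₂ : 0 ≤ (|c| - c) * (w k - w' k) ^ 2 :=
      mul_nonneg (by linarith [le_abs_self c]) (sq_nonneg _)
    exact mul_nonpos_of_nonneg_of_nonpos (div_nonneg (exp_pos _).le (sq_nonneg k)) (by nlinarith)
  calc w k ^ 2 ≤ (w k ^ 2 + w' k ^ 2) * exp (|c| / k) := by
        nlinarith [sq_nonneg (w' k), one_le_exp (div_nonneg (abs_nonneg c) (ha.le.trans hk))]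
    _ ≤ _ := hanti (mem_Ici.mpr le_rfl) hk hk

theorem max_one_inv_rpow_le (l : ℝ) {k : ℝ} (hk : 0 < k) :
    max 1 k⁻¹ ^ l ≤ 2 ^ |l| * ((1 + k) / k) ^ l := by
  have hq : (1 + k) / k = 1 + k⁻¹ := by rw [add_div, div_self hk.ne', one_div, add_comm]
  have hm : 0 < max 1 k⁻¹ := lt_max_of_lt_left one_pos
  have hle : max 1 k⁻¹ ≤ (1 + k) / k := hq ▸ max_le (by simp [hk.le]) (by simp)
  have hge : (1 + k) / k ≤ 2 * max 1 k⁻¹ := by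
    rw [hq, two_mul]; exact add_le_add (le_max_left _ _) (le_max_right _ _)
  rcases le_total 0 l with hl | hl
  · calc max 1 k⁻¹ ^ l ≤ ((1 + k) / k) ^ l := rpow_le_rpow hm.le hle hl
      _ ≤ 2 ^ |l| * ((1 + k) / k) ^ l :=
        le_mul_of_one_le_left (by positivity) (one_le_rpow one_le_two (abs_nonneg l))
  · calc max 1 k⁻¹ ^ l = 2 ^ |l| * (2 * max 1 k⁻¹) ^ l := by
          rw [mul_rpow zero_le_two hm.le, ← mul_assoc, ← rpow_add two_pos, abs_of_nonpos hl,
            neg_add_cancel, rpow_zero, one_mul]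
      _ ≤ 2 ^ |l| * ((1 + k) / k) ^ l :=
        mul_le_mul_of_nonneg_left (rpow_le_rpow_of_nonpos (by positivity) hge hl) (by positivity)

noncomputable def besselCoeff (ν : ℝ) (n : ℕ) : ℝ :=
  (-1 / 4) ^ n / (n ! * Gamma (ν + n + 1))

noncomputable def besselSeries (ν : ℝ) : ℝ → ℝ := ofScalarsSum (besselCoeff ν)

theorem besselJ_eq_rpow_mul_besselSeries (ν r : ℝ) :
    besselJ ν r = (r / 2) ^ ν * besselSeries ν (r ^ 2) := by
  rw [besselJ, besselSeries, ofScalars_sum_eq]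
  congr 1
  refine tsum_congr fun n ↦ ?_
  rw [besselCoeff, smul_eq_mul, div_mul_eq_mul_div, ← mul_pow]
  ring_nf

theorem succ_mul_besselCoeff_succ (ν : ℝ) (n : ℕ) :
    (n + 1) * besselCoeff ν (n + 1) = -(1 / 4) * besselCoeff (ν + 1) n := by
  simp only [besselCoeff, Nat.factorial_succ]
  push_cast
  rw [show ν + (n + 1) + 1 = ν + 1 + n + 1 by ring]
  have : (n + 1 : ℝ) ≠ 0 := by positivity
  field_simp
  ring

section Bessel

variable {ν : ℝ}

theorem add_natCast_add_one_pos (hν : -1 < ν) (n : ℕ) : 0 < ν + n + 1 := by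
  linarith [n.cast_nonneg (α := ℝ)]

theorem besselCoeff_ne_zero (hν : -1 < ν) (n : ℕ) : besselCoeff ν n ≠ 0 := by
  have := Gamma_pos_of_pos (add_natCast_add_one_pos hν n)
  simp only [besselCoeff]
  positivity

theorem besselCoeff_eq_mul_besselCoeff_add_one (hν : -1 < ν) (n : ℕ) :
    besselCoeff ν n = (ν + n + 1) * besselCoeff (ν + 1) n := by
  have hpos := add_natCast_add_one_pos hν n
  have hΓ : Gamma (ν + 1 + n + 1) = (ν + n + 1) * Gamma (ν + n + 1) := by
    rw [← Gamma_add_one hpos.ne']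
    ring_nf
  have := Gamma_pos_of_pos hpos
  simp only [besselCoeff, hΓ]
  field_simp

theorem norm_besselCoeff_succ_div (hν : -1 < ν) (n : ℕ) :
    ‖besselCoeff ν (n + 1)‖ / ‖besselCoeff ν n‖ = 1 / (4 * ((n + 1) * (ν + n + 1))) := by
  have hsucc := succ_mul_besselCoeff_succ ν n
  have hpos := add_natCast_add_one_pos hν n
  have hne := besselCoeff_ne_zero (by linarith : -1 < ν + 1) n
  have hsucc' : besselCoeff ν (n + 1) = -(1 / 4) * besselCoeff (ν + 1) n / (n + 1) := by
    rw [eq_div_iff (by positivity), mul_comm, hsucc]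
  rw [hsucc', besselCoeff_eq_mul_besselCoeff_add_one hν n]
  simp only [norm_div, norm_mul, norm_neg, Real.norm_of_nonneg hpos.le,
    Real.norm_of_nonneg (by positivity : (0 : ℝ) ≤ n + 1)]
  field_simp
  norm_num

theorem radius_ofScalars_besselCoeff (hν : -1 < ν) :
    (ofScalars ℝ (besselCoeff ν)).radius = ⊤ := by
  refine ofScalars_radius_eq_top_of_tendsto ℝ _ (.of_forall (besselCoeff_ne_zero hν)) ?_
  simp only [norm_besselCoeff_succ_div hν]
  refine tendsto_const_nhds.div_atTop (.const_mul_atTop four_pos (.atTop_mul_atTop₀ ?_ ?_))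
  · exact tendsto_atTop_add_const_right _ 1 tendsto_natCast_atTop_atTop
  · exact tendsto_atTop_add_const_right _ 1
      (tendsto_atTop_add_const_left _ ν tendsto_natCast_atTop_atTop)

theorem hasSum_besselSeries (hν : -1 < ν) (x : ℝ) :
    HasSum (fun n ↦ besselCoeff ν n * x ^ n) (besselSeries ν x) :=
  hasSum_ofScalarsSum (radius_ofScalars_besselCoeff hν) x

theorem succ_mul_besselCoeff_succ_eq_smul (ν : ℝ) :
    (fun n : ℕ ↦ (n + 1) * besselCoeff ν (n + 1)) = -(1 / 4 : ℝ) • besselCoeff (ν + 1) :=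
  funext (succ_mul_besselCoeff_succ ν)

theorem radius_ofScalars_succ_mul_besselCoeff_succ (hν : -1 < ν) :
    (ofScalars ℝ fun n ↦ (n + 1) * besselCoeff ν (n + 1)).radius = ⊤ := by
  rw [succ_mul_besselCoeff_succ_eq_smul, ofScalars_smul, eq_top_iff,
    ← radius_ofScalars_besselCoeff (by linarith : -1 < ν + 1)]
  exact radius_le_smul

theorem ofScalarsSum_succ_mul_besselCoeff_succ (ν x : ℝ) :
    ofScalarsSum (fun n ↦ (n + 1) * besselCoeff ν (n + 1)) x =
      -(1 / 4) * besselSeries (ν + 1) x := by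
  simp only [succ_mul_besselCoeff_succ_eq_smul, besselSeries, ofScalars_sum_eq, Pi.smul_apply,
    smul_eq_mul, mul_assoc, tsum_mul_left]

theorem hasDerivAt_besselSeries (hν : -1 < ν) (x : ℝ) :
    HasDerivAt (besselSeries ν) (-(1 / 4) * besselSeries (ν + 1) x) x :=
  ofScalarsSum_succ_mul_besselCoeff_succ ν x ▸ hasDerivAt_ofScalarsSum
    (radius_ofScalars_besselCoeff hν) (radius_ofScalars_succ_mul_besselCoeff_succ hν) x

theorem besselSeries_eq_sub (hν : -1 < ν) (x : ℝ) :
    besselSeries ν x = (ν + 1) * besselSeries (ν + 1) x - x / 4 * besselSeries (ν + 2) x := by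
  have hν' : -1 < ν + 1 := by linarith
  have hsum := ((hasSum_besselSeries hν' x).mul_left (ν + 1)).add
    (hasSum_natCast_mul_mul_pow (radius_ofScalars_succ_mul_besselCoeff_succ hν') x)
  rw [ofScalarsSum_succ_mul_besselCoeff_succ, show ν + 1 + 1 = ν + 2 by ring] at hsum
  rw [(hasSum_besselSeries hν x).unique (hsum.congr_fun fun n ↦ by
    rw [besselCoeff_eq_mul_besselCoeff_add_one hν n]; ring)]
  ring

noncomputable def besselLiouville (ν k : ℝ) : ℝ := k ^ (ν + 1 / 2) * besselSeries ν (k ^ 2)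

theorem sqrt_mul_besselJ_eq (ν : ℝ) {k : ℝ} (hk : 0 < k) :
    √k * besselJ ν k = 2 ^ (-ν) * besselLiouville ν k := by
  rw [besselJ_eq_rpow_mul_besselSeries, besselLiouville, sqrt_eq_rpow,
    div_rpow hk.le zero_le_two, rpow_add hk, rpow_neg zero_le_two]
  ring

theorem hasDerivAt_besselLiouville (hν : -1 < ν) {k : ℝ} (hk : 0 < k) :
    HasDerivAt (besselLiouville ν)
      ((ν + 1 / 2) / k * besselLiouville ν k - besselLiouville (ν + 1) k / 2) k := by
  have hS := (hasDerivAt_besselSeries hν (k ^ 2)).comp k (hasDerivAt_pow 2 k)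
  refine ((hasDerivAt_rpow_const (p := ν + 1 / 2) (.inl hk.ne')).mul hS).congr_deriv ?_
  simp only [besselLiouville, Function.comp_apply]
  rw [rpow_sub_one hk.ne', show ν + 1 + 1 / 2 = ν + 1 / 2 + 1 by ring, rpow_add_one hk.ne']
  field_simp
  ring

theorem besselLiouville_add_two (hν : -1 < ν) {k : ℝ} (hk : 0 < k) :
    besselLiouville (ν + 2) k =
      4 * (ν + 1) / k * besselLiouville (ν + 1) k - 4 * besselLiouville ν k := by
  simp only [besselLiouville]
  rw [besselSeries_eq_sub hν, show ν + 2 + 1 / 2 = ν + 1 / 2 + 1 + 1 by ring,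
    show ν + 1 + 1 / 2 = ν + 1 / 2 + 1 by ring, rpow_add_one hk.ne', rpow_add_one hk.ne']
  field_simp
  ring

theorem hasDerivAt_besselLiouville_deriv (hν : -1 < ν) {k : ℝ} (hk : 0 < k) :
    HasDerivAt (fun k ↦ (ν + 1 / 2) / k * besselLiouville ν k - besselLiouville (ν + 1) k / 2)
      (-(1 + (1 / 4 - ν ^ 2) / k ^ 2) * besselLiouville ν k) k := by
  have h₀ := hasDerivAt_besselLiouville hν hk
  have h₁ := hasDerivAt_besselLiouville (by linarith : -1 < ν + 1) hk
  refine ((((hasDerivAt_const k (ν + 1 / 2)).div (hasDerivAt_id' k) hk.ne').mul h₀).sub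
    (h₁.div_const 2)).congr_deriv ?_
  rw [show ν + 1 + 1 = ν + 2 by ring, besselLiouville_add_two hν hk, Pi.div_apply]
  field_simp
  ring

theorem exists_abs_besselLiouville_le_of_one_le (hν : -1 < ν) :
    ∃ B, ∀ k, 1 ≤ k → |besselLiouville ν k| ≤ B := by
  have hsq := fun k (hk : 1 ≤ k) ↦ sq_le_of_ode_one_add_div_sq one_pos
    (fun k hk ↦ hasDerivAt_besselLiouville hν (one_pos.trans_le hk))
    (fun k hk ↦ hasDerivAt_besselLiouville_deriv hν (one_pos.trans_le hk)) hk
  exact ⟨_, fun k hk ↦ abs_le_sqrt (hsq k hk)⟩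

theorem exists_abs_besselLiouville_le_rpow (hν : -1 < ν) :
    ∃ M, ∀ k ∈ Ioc (0 : ℝ) 1, |besselLiouville ν k| ≤ M * k ^ (ν + 1 / 2) := by
  have hcont : Continuous (besselSeries ν) :=
    continuous_iff_continuousAt.2 fun x ↦ (hasDerivAt_besselSeries hν x).continuousAt
  obtain ⟨M, hM⟩ := (isCompact_Icc (a := 0) (b := 1)).exists_bound_of_continuousOn
    hcont.continuousOn
  refine ⟨M, fun k ⟨hk0, hk1⟩ ↦ ?_⟩
  rw [besselLiouville, abs_mul, abs_of_pos (rpow_pos_of_pos hk0 _), mul_comm]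
  exact mul_le_mul_of_nonneg_right (hM _ ⟨sq_nonneg k, by nlinarith⟩) (rpow_nonneg hk0.le _)

theorem exists_abs_besselLiouville_le (hν : -1 < ν) :
    ∃ C, 0 < C ∧ ∀ k, 0 < k →
      |besselLiouville ν k| ≤ C * max 1 k⁻¹ ^ (-(ν + 1 / 2)) := by
  obtain ⟨M, hM⟩ := exists_abs_besselLiouville_le_rpow hν
  obtain ⟨B, hB⟩ := exists_abs_besselLiouville_le_of_one_le hν
  refine ⟨max (max M B) 1, by positivity, fun k hk ↦ ?_⟩
  rcases le_total k 1 with hk1 | hk1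
  · rw [max_eq_right (one_le_inv₀ hk |>.2 hk1), inv_rpow hk.le, rpow_neg hk.le, inv_inv]
    exact (hM k ⟨hk, hk1⟩).trans <| mul_le_mul_of_nonneg_right
      ((le_max_left M B).trans (le_max_left _ _)) (rpow_nonneg hk.le _)
  · rw [max_eq_left (inv_le_one_of_one_le₀ hk1), one_rpow, mul_one]
    exact (hB k hk1).trans ((le_max_right M B).trans (le_max_left _ _))

end Bessel

/-- For `l ∈ (−1/2, 1/2)` there is `C > 0` (depending only on `l`) such that
`|√k J_{−l−1/2}(k)| ≤ C ((1+k)/k)^l` for all `k > 0`. -/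
theorem sqrt_mul_besselJ_bound (l : ℝ) (hl : l ∈ Set.Ioo (-(1/2) : ℝ) (1/2)) :
    ∃ C : ℝ, 0 < C ∧ ∀ k : ℝ, 0 < k →
      |Real.sqrt k * besselJ (-l - 1/2) k| ≤ C * ((1 + k) / k) ^ l := by
  obtain ⟨C, hC, hbound⟩ :=
    exists_abs_besselLiouville_le (ν := -l - 1 / 2) (by linarith [hl.2])
  refine ⟨2 ^ (l + 1 / 2) * C * 2 ^ |l|, by positivity, fun k hk ↦ ?_⟩
  have hexp : -(-l - 1 / 2 + 1 / 2) = l := by ring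
  rw [hexp] at hbound
  calc |√k * besselJ (-l - 1 / 2) k|
        = 2 ^ (l + 1 / 2) * |besselLiouville (-l - 1 / 2) k| := by
        rw [sqrt_mul_besselJ_eq _ hk, abs_mul, abs_of_pos (by positivity), neg_sub,
          sub_neg_eq_add, add_comm]
    _ ≤ 2 ^ (l + 1 / 2) * (C * (2 ^ |l| * ((1 + k) / k) ^ l)) := by
        gcongr
        exact (hbound k hk).trans (mul_le_mul_of_nonneg_left (max_one_inv_rpow_le l hk) hC.le)
    _ = 2 ^ (l + 1 / 2) * C * 2 ^ |l| * ((1 + k) / k) ^ l := by ring
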